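/- arXiv:1212.6584 — 2 statements merged into one kernel-verified Lean document; each statement's English description precedes it below -/
import Mathlib

section
/- Let $\mathcal{D}$ be a bounded sequence of integers $(d_k)_{k\ge 1}$ with every $d_k \ge 2$, and let $(i_1,j_1)$ and $(i_2,j_2)$ be two pairs of real numbers with $0 < i_s, j_s < 1$ and $i_s + j_s = 1$ for $s = 1,2$. Then $\mathrm{Bad}_{\mathcal{D}}(i_1,j_1) \cap \mathrm{Bad}_{\mathcal{D}}(i_2,j_2) \neq \emptyset$ (the mixed Schmidt conjecture). -/
/-!
Fix a small `c > 0`. A denominator `q` can only violate the defining inequality of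
`Bad_𝒟(i,j)` when `|q|_𝒟 ≤ (c/q)^i`, and then `x` only has to avoid the balls
`B(p/q, (c/q)^j/q)`. Two such rationals `p/q ≠ p'/q'` with `q ≤ q'` have a common divisor
`D_n ≥ (q/c)^i`, so they lie at least `D_n/(qq') ≥ (c/q')^j/(cq')` apart: balls of comparable
radius `r` have centres about `r/c` apart. Grouping the balls by radius into stages of ratio 32,
a window of length `32^-t` meets at most one stage-`t` ball of each of the two families, and one
of three well-spaced subwindows of length `32^-(t+1)` misses both. The nested windows shrink to
a point of `Bad_𝒟(i₁,j₁) ∩ Bad_𝒟(i₂,j₂)`.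
-/

/-- `Dprod d n = d 0 * d 1 * ... * d (n-1)`, i.e. the product of the first `n`
terms of the sequence `d` (so `Dprod d 0 = 1`). -/
def Dprod (d : ℕ → ℕ) (n : ℕ) : ℕ := ∏ k ∈ Finset.range n, d k

/-- The `𝒟`-adic pseudo absolute value `|q|_𝒟 = inf {1 / D_n : q ∈ D_n ℤ}`. -/
noncomputable def pseudoAbs (d : ℕ → ℕ) (q : ℕ) : ℝ :=
  sInf {x : ℝ | ∃ n : ℕ, Dprod d n ∣ q ∧ x = 1 / (Dprod d n : ℝ)}

/-- Distance from a real number to its nearest integer. -/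
noncomputable def distNearestInt (x : ℝ) : ℝ := |x - round x|

/-- The set of mixed `(i,j)`-badly approximable numbers `Bad_𝒟(i,j)`. -/
def BadD (d : ℕ → ℕ) (i j : ℝ) : Set ℝ :=
  {x : ℝ | ∃ c : ℝ, 0 < c ∧ ∀ q : ℕ, 0 < q →
    max (pseudoAbs d q ^ (1 / i)) (distNearestInt ((q : ℝ) * x) ^ (1 / j)) > c / (q : ℝ)}

open Set Filter Topology

theorem exists_forall_of_nested_Icc (ℓ : ℕ → ℝ) (hℓ : ∀ t, 0 ≤ ℓ t) (G : ℕ → ℝ → Prop)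
    (step : ∀ t a, ∃ a', Icc a' (a' + ℓ (t + 1)) ⊆ Icc a (a + ℓ t) ∧
      ∀ z ∈ Icc a' (a' + ℓ (t + 1)), G t z) :
    ∃ x, ∀ t, G t x := by
  choose next hnext hgood using step
  let left : ℕ → ℝ := fun t => Nat.rec (motive := fun _ => ℝ) 0 next t
  have hanti : Antitone fun t => Icc (left t) (left t + ℓ t) :=
    antitone_nat_of_succ_le fun t => hnext t (left t)
  have hx := ciSup_mem_iInter_Icc_of_antitone_Icc hanti fun t => le_add_of_nonneg_right (hℓ t)
  exact ⟨_, fun t => hgood t (left t) _ (mem_iInter.mp hx (t + 1))⟩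

theorem exists_Icc_subset_far_from_two (a L y₁ y₂ : ℝ) (hL : 0 < L) :
    ∃ a', Icc a' (a' + L / 32) ⊆ Icc a (a + L) ∧
      ∀ z ∈ Icc a' (a' + L / 32), L / 32 < |z - y₁| ∧ L / 32 < |z - y₂| := by
  have far : ∀ s y, y ∉ Icc (s - L / 32) (s + L / 16) →
      ∀ z ∈ Icc s (s + L / 32), L / 32 < |z - y| := by
    rintro s y hy z ⟨hz₁, hz₂⟩
    rcases not_and_or.mp hy with hy | hy
    · exact lt_abs.mpr (Or.inl (by linarith [not_le.mp hy]))
    · exact lt_abs.mpr (Or.inr (by linarith [not_le.mp hy]))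
  -- each `y` lies in at most one of the three intervals `[s - L/32, s + L/16]`
  obtain ⟨s, hs, h₁, h₂⟩ : ∃ s ∈ ({a, a + L / 8, a + L / 4} : Set ℝ),
      y₁ ∉ Icc (s - L / 32) (s + L / 16) ∧ y₂ ∉ Icc (s - L / 32) (s + L / 16) := by
    by_contra! h
    simp only [mem_insert_iff, mem_singleton_iff, forall_eq_or_imp, forall_eq, mem_Icc] at h
    obtain ⟨h0, h1, h2⟩ := h
    by_cases hy : y₁ < a + L / 8 - L / 32
    · have := h1 fun h => by linarith [h.1]
      have := h2 fun h => by linarith [h.1]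
      linarith
    · have := h0 fun h => by linarith [h.2]
      by_cases hy' : y₁ ≤ a + L / 8 + L / 16
      · have := h2 fun h => by linarith [h.1]
        linarith
      · have := h1 fun h => by linarith [h.2]
        linarith
  refine ⟨s, Icc_subset_Icc ?_ ?_, fun z hz => ⟨far s y₁ h₁ z hz, far s y₂ h₂ z hz⟩⟩ <;>
    rcases hs with rfl | rfl | rfl <;> linarith

/-- `B t` is the set of stage-`t` closed balls, each encoded as the pair `(centre, radius)`. -/
def IsSparse (B : ℕ → Set (ℝ × ℝ)) : Prop :=
  ∀ t, ∀ b ∈ B t, b.2 ≤ (32⁻¹ : ℝ) ^ (t + 1) ∧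
    ∀ b' ∈ B t, b.1 ≠ b'.1 → 2 * (32⁻¹ : ℝ) ^ t < |b.1 - b'.1|

theorem IsSparse.exists_center {B : ℕ → Set (ℝ × ℝ)} (hB : IsSparse B) (t : ℕ) (a : ℝ) :
    ∃ y, ∀ b ∈ B t, ∀ z ∈ Icc a (a + (32⁻¹ : ℝ) ^ t), |z - b.1| ≤ b.2 → b.1 = y := by
  by_cases h : ∃ b₀ ∈ B t, ∃ z₀ ∈ Icc a (a + (32⁻¹ : ℝ) ^ t), |z₀ - b₀.1| ≤ b₀.2
  · obtain ⟨b₀, hb₀, z₀, hz₀, hd₀⟩ := h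
    refine ⟨b₀.1, fun b hb z hz hd => ?_⟩
    by_contra hne
    have hsep := (hB t b hb).2 b₀ hb₀ hne
    have hr := (hB t b hb).1
    have hr₀ := (hB t b₀ hb₀).1
    have hzz : |z - z₀| ≤ (32⁻¹ : ℝ) ^ t := abs_sub_le_iff.mpr
      ⟨by linarith [hz.2, hz₀.1], by linarith [hz.1, hz₀.2]⟩
    rw [pow_succ] at hr hr₀
    linarith [abs_sub_le b.1 z b₀.1, abs_sub_le z z₀ b₀.1, abs_sub_comm b.1 z,
      pow_pos (by norm_num : (0 : ℝ) < 32⁻¹) t]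
  · push Not at h
    exact ⟨0, fun b hb z hz hd => absurd hd (not_le.mpr (h b hb z hz))⟩

theorem exists_forall_lt_abs_sub_of_isSparse {B₁ B₂ : ℕ → Set (ℝ × ℝ)} (h₁ : IsSparse B₁)
    (h₂ : IsSparse B₂) : ∃ x, ∀ t, ∀ b ∈ B₁ t ∪ B₂ t, b.2 < |x - b.1| := by
  refine exists_forall_of_nested_Icc (fun t => (32⁻¹ : ℝ) ^ t) (fun t => by positivity)
    (fun t z => ∀ b ∈ B₁ t ∪ B₂ t, b.2 < |z - b.1|) fun t a => ?_
  obtain ⟨y₁, hy₁⟩ := h₁.exists_center t a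
  obtain ⟨y₂, hy₂⟩ := h₂.exists_center t a
  obtain ⟨a', hsub, hfar⟩ := exists_Icc_subset_far_from_two a ((32⁻¹ : ℝ) ^ t) y₁ y₂ (by positivity)
  have hℓ : (32⁻¹ : ℝ) ^ (t + 1) = 32⁻¹ ^ t / 32 := by rw [pow_succ]; ring
  refine ⟨a', by rwa [hℓ], fun z hz b hb => ?_⟩
  rw [hℓ] at hz
  by_contra! hle
  rcases hb with hb | hb
  · have hr := (h₁ t b hb).1
    rw [hy₁ b hb z (hsub hz) hle] at hle
    linarith [(hfar z hz).1]
  · have hr := (h₂ t b hb).1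
    rw [hy₂ b hb z (hsub hz) hle] at hle
    linarith [(hfar z hz).2]

theorem Dprod_dvd_Dprod (d : ℕ → ℕ) {m n : ℕ} (h : m ≤ n) : Dprod d m ∣ Dprod d n :=
  Finset.prod_dvd_prod_of_subset _ _ _ (Finset.range_subset_range.mpr h)

/-- The infimum defining `|q|_𝒟` is attained, since the `D_n` dividing `q ≠ 0` are among its
finitely many divisors. -/
theorem exists_dvd_pseudoAbs_eq (d : ℕ → ℕ) {q : ℕ} (hq : q ≠ 0) :
    ∃ n, Dprod d n ∣ q ∧ pseudoAbs d q = 1 / Dprod d n := by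
  set S := {x : ℝ | ∃ n : ℕ, Dprod d n ∣ q ∧ x = 1 / (Dprod d n : ℝ)}
  have hne : S.Nonempty := ⟨_, 0, by simp [Dprod], rfl⟩
  have hfin : S.Finite := (q.divisors.finite_toSet.image fun m : ℕ => 1 / (m : ℝ)).subset <| by
    rintro _ ⟨n, hn, rfl⟩
    exact ⟨_, Nat.mem_divisors.mpr ⟨hn, hq⟩, rfl⟩
  exact hne.csInf_mem hfin

theorem exists_dvd_dvd_one_div_le_max_pseudoAbs (d : ℕ → ℕ) {q q' : ℕ} (hq : q ≠ 0)
    (hq' : q' ≠ 0) :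
    ∃ D : ℕ, D ∣ q ∧ D ∣ q' ∧ 1 / (D : ℝ) ≤ max (pseudoAbs d q) (pseudoAbs d q') := by
  obtain ⟨n, hn, hq⟩ := exists_dvd_pseudoAbs_eq d hq
  obtain ⟨n', hn', hq'⟩ := exists_dvd_pseudoAbs_eq d hq'
  rcases le_total n n' with h | h
  · exact ⟨_, hn, (Dprod_dvd_Dprod d h).trans hn', hq ▸ le_max_left _ _⟩
  · exact ⟨_, (Dprod_dvd_Dprod d h).trans hn, hn', hq' ▸ le_max_right _ _⟩

theorem natCast_div_mul_le_abs_div_sub_div {D q q' : ℕ} (p p' : ℤ) (hq : 0 < q) (hq' : 0 < q')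
    (hD : D ∣ q) (hD' : D ∣ q') (hne : (p : ℝ) / q ≠ p' / q') :
    (D : ℝ) / (q * q') ≤ |(p : ℝ) / q - p' / q'| := by
  have hQ : (0 : ℝ) < q := by exact_mod_cast hq
  have hQ' : (0 : ℝ) < q' := by exact_mod_cast hq'
  have hK : p * q' - q * p' ≠ 0 := by
    intro h
    apply hne
    rw [div_eq_div_iff hQ.ne' hQ'.ne', mul_comm (p' : ℝ)]
    exact_mod_cast sub_eq_zero.mp h
  have hDK : (D : ℤ) ∣ p * q' - q * p' :=
    dvd_sub (dvd_mul_of_dvd_right (Int.natCast_dvd_natCast.mpr hD') _)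
      (dvd_mul_of_dvd_left (Int.natCast_dvd_natCast.mpr hD) _)
  have hle : (D : ℤ) ≤ |p * q' - q * p'| := Int.le_of_dvd (abs_pos.mpr hK) ((dvd_abs _ _).mpr hDK)
  rw [div_sub_div _ _ hQ.ne' hQ'.ne', abs_div, abs_of_pos (mul_pos hQ hQ')]
  gcongr
  exact_mod_cast hle

theorem rpow_div_le_mul_abs_div_sub_div {d : ℕ → ℕ} {i j c : ℝ} (hi : 0 ≤ i) (hj : 0 ≤ j)
    (hij : i + j = 1) (hc : 0 < c) {q q' : ℕ} (hq : 0 < q) (hqq' : q ≤ q')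
    (hdq : pseudoAbs d q ≤ (c / q) ^ i) (hdq' : pseudoAbs d q' ≤ (c / q') ^ i) (p p' : ℤ)
    (hne : (p : ℝ) / q ≠ p' / q') :
    (c / q') ^ j / q' ≤ c * |(p : ℝ) / q - p' / q'| := by
  have hq' : 0 < q' := hq.trans_le hqq'
  have hQ : (0 : ℝ) < q := by exact_mod_cast hq
  have hQ' : (0 : ℝ) < q' := by exact_mod_cast hq'
  have hcq : c / q' ≤ c / q := div_le_div_of_nonneg_left hc.le hQ (by exact_mod_cast hqq')
  obtain ⟨D, hD, hD', hDmax⟩ := exists_dvd_dvd_one_div_le_max_pseudoAbs d hq.ne' hq'.ne'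
  have hDpos : (0 : ℝ) < D := by exact_mod_cast Nat.pos_of_dvd_of_pos hD hq
  have hDbig : 1 ≤ (c / q) ^ i * D := by
    have h : 1 / (D : ℝ) ≤ (c / q) ^ i :=
      hDmax.trans (max_le hdq (hdq'.trans (Real.rpow_le_rpow (by positivity) hcq hi)))
    rwa [div_le_iff₀ hDpos] at h
  calc (c / q') ^ j / q' ≤ (c / q) ^ j * ((c / q) ^ i * D) / q' := by
        gcongr
        exact (Real.rpow_le_rpow (by positivity) hcq hj).trans
          (le_mul_of_one_le_right (by positivity) hDbig)
    _ = c * (D / (q * q')) := by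
        rw [← mul_assoc, ← Real.rpow_add (by positivity), add_comm, hij, Real.rpow_one]
        field_simp
    _ ≤ c * |(p : ℝ) / q - p' / q'| := by
        gcongr
        exact natCast_div_mul_le_abs_div_sub_div p p' hq hq' hD hD' hne

/-- The balls a point of `Bad_𝒟(i,j)` with constant `c` must avoid, grouped by radius into
stages. -/
def badBalls (d : ℕ → ℕ) (i j c : ℝ) (t : ℕ) : Set (ℝ × ℝ) :=
  {b | ∃ q : ℕ, 0 < q ∧ pseudoAbs d q ≤ (c / q) ^ i ∧ ∃ p : ℤ,
    b = ((p : ℝ) / q, (c / q) ^ j / q) ∧ (32⁻¹ : ℝ) ^ (t + 2) < b.2 ∧ b.2 ≤ 32⁻¹ ^ (t + 1)}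

theorem isSparse_badBalls (d : ℕ → ℕ) {i j c : ℝ} (hi : 0 ≤ i) (hj : 0 ≤ j) (hij : i + j = 1)
    (hc : 0 < c) (hc' : c ≤ 2048⁻¹) : IsSparse (badBalls d i j c) := by
  rintro t _ ⟨q, hq, hdq, p, rfl, hlow, hup⟩
  refine ⟨hup, ?_⟩
  rintro _ ⟨q', hq', hdq', p', rfl, hlow', -⟩ hne
  have hsep : min ((c / q) ^ j / q) ((c / q') ^ j / q') ≤ c * |(p : ℝ) / q - p' / q'| := by
    rcases le_total q q' with h | h
    · exact (min_le_right _ _).trans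
        (rpow_div_le_mul_abs_div_sub_div hi hj hij hc hq h hdq hdq' p p' hne)
    · rw [abs_sub_comm]
      exact (min_le_left _ _).trans
        (rpow_div_le_mul_abs_div_sub_div hi hj hij hc hq' h hdq' hdq p' p (Ne.symm hne))
  calc 2 * (32⁻¹ : ℝ) ^ t = 2048 * 32⁻¹ ^ (t + 2) := by ring
    _ < 2048 * min ((c / q) ^ j / q) ((c / q') ^ j / q') := by gcongr; exact lt_min hlow hlow'
    _ ≤ 2048 * (c * |(p : ℝ) / q - p' / q'|) := by gcongr
    _ ≤ |(p : ℝ) / q - p' / q'| := by nlinarith [abs_nonneg ((p : ℝ) / q - p' / q')]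

theorem exists_pow_lt_le_pow (r : ℝ) (hr : 0 < r) (hr' : r ≤ 32⁻¹) :
    ∃ t : ℕ, (32⁻¹ : ℝ) ^ (t + 2) < r ∧ r ≤ 32⁻¹ ^ (t + 1) := by
  obtain ⟨t, h₁, h₂⟩ := exists_nat_pow_near_of_lt_one (by positivity : 0 < 32 * r) (by linarith)
    (by norm_num : (0 : ℝ) < 32⁻¹) (by norm_num)
  exact ⟨t, by rw [pow_succ]; linarith, by rw [pow_succ]; linarith⟩

theorem distNearestInt_mul_eq (x : ℝ) {q : ℝ} (hq : 0 < q) :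
    distNearestInt (q * x) = q * |x - round (q * x) / q| := by
  have h : q * x - round (q * x) = q * (x - round (q * x) / q) := by field_simp
  rw [distNearestInt, h, abs_mul, abs_of_pos hq]

theorem mem_BadD_of_forall_lt_abs_sub {d : ℕ → ℕ} {i j c x : ℝ} (hi : 0 < i) (hj : 0 < j)
    (hc : 0 < c) (hcj : c ^ j ≤ 32⁻¹) (hx : ∀ t, ∀ b ∈ badBalls d i j c t, b.2 < |x - b.1|) :
    x ∈ BadD d i j := by
  refine ⟨c, hc, fun q hq => ?_⟩
  have hQ : (0 : ℝ) < q := by exact_mod_cast hq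
  rw [gt_iff_lt, one_div, one_div]
  by_cases hdq : pseudoAbs d q ≤ (c / q) ^ i
  · have hr : (c / q) ^ j / q ≤ 32⁻¹ :=
      calc (c / q) ^ j / q ≤ (c / q) ^ j := div_le_self (by positivity) (by exact_mod_cast hq)
        _ ≤ c ^ j := Real.rpow_le_rpow (by positivity)
            (div_le_self hc.le (by exact_mod_cast hq)) hj.le
        _ ≤ 32⁻¹ := hcj
    obtain ⟨t, ht⟩ := exists_pow_lt_le_pow _ (by positivity) hr
    have hball := hx t _ ⟨q, hq, hdq, round (q * x), rfl, ht⟩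
    have hdist : (c / q) ^ j < distNearestInt (q * x) := by
      rw [distNearestInt_mul_eq x hQ]
      rwa [div_lt_iff₀' hQ] at hball
    exact lt_max_of_lt_right
      ((Real.lt_rpow_inv_iff_of_pos (by positivity) (abs_nonneg _) hj).mpr hdist)
  · exact lt_max_of_lt_left ((Real.lt_rpow_inv_iff_of_pos (by positivity)
      ((Real.rpow_nonneg (by positivity) _).trans (not_le.mp hdq).le) hi).mpr (not_le.mp hdq))

theorem eventually_rpow_le {j ε : ℝ} (hj : 0 < j) (hε : 0 < ε) :
    ∀ᶠ c in 𝓝 (0 : ℝ), c ^ j ≤ ε :=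
  (Real.continuousAt_rpow_const 0 j (Or.inr hj.le)).eventually
    (eventually_le_nhds (by simpa [Real.zero_rpow hj.ne'] using hε))

theorem mixed_schmidt_conjecture_general (d : ℕ → ℕ)
    (i₁ j₁ i₂ j₂ : ℝ)
    (hi₁ : 0 < i₁) (hj₁ : 0 < j₁) (hij₁ : i₁ + j₁ = 1)
    (hi₂ : 0 < i₂) (hj₂ : 0 < j₂) (hij₂ : i₂ + j₂ = 1) :
    (BadD d i₁ j₁ ∩ BadD d i₂ j₂).Nonempty := by
  have hsmall : ∀ᶠ c in 𝓝 (0 : ℝ), c ≤ 2048⁻¹ ∧ c ^ j₁ ≤ 32⁻¹ ∧ c ^ j₂ ≤ 32⁻¹ :=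
    (eventually_le_nhds (by norm_num)).and
      ((eventually_rpow_le hj₁ (by norm_num)).and (eventually_rpow_le hj₂ (by norm_num)))
  obtain ⟨c, hc, hc', hcj₁, hcj₂⟩ : ∃ c : ℝ, 0 < c ∧ c ≤ 2048⁻¹ ∧ c ^ j₁ ≤ 32⁻¹ ∧ c ^ j₂ ≤ 32⁻¹ :=
    ((show ∀ᶠ c in 𝓝[>] (0 : ℝ), 0 < c from self_mem_nhdsWithin).and
      (nhdsWithin_le_nhds hsmall)).exists
  obtain ⟨x, hx⟩ := exists_forall_lt_abs_sub_of_isSparse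
    (isSparse_badBalls d hi₁.le hj₁.le hij₁ hc hc') (isSparse_badBalls d hi₂.le hj₂.le hij₂ hc hc')
  exact ⟨x, mem_BadD_of_forall_lt_abs_sub hi₁ hj₁ hc hcj₁ fun t b hb => hx t b (.inl hb),
    mem_BadD_of_forall_lt_abs_sub hi₂ hj₂ hc hcj₂ fun t b hb => hx t b (.inr hb)⟩

/-- The mixed Schmidt conjecture: for a bounded sequence `d` of integers `≥ 2` and two
admissible pairs `(i₁,j₁)`, `(i₂,j₂)`, the sets `Bad_𝒟(i₁,j₁)` and `Bad_𝒟(i₂,j₂)`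
intersect. -/
theorem mixed_schmidt_conjecture (d : ℕ → ℕ) (hd2 : ∀ k, 2 ≤ d k) (hdbdd : ∃ M, ∀ k, d k ≤ M)
    (i₁ j₁ i₂ j₂ : ℝ)
    (hi₁ : 0 < i₁) (hi₁' : i₁ < 1) (hj₁ : 0 < j₁) (hj₁' : j₁ < 1) (hij₁ : i₁ + j₁ = 1)
    (hi₂ : 0 < i₂) (hi₂' : i₂ < 1) (hj₂ : 0 < j₂) (hj₂' : j₂ < 1) (hij₂ : i₂ + j₂ = 1) :
    (BadD d i₁ j₁ ∩ BadD d i₂ j₂).Nonempty :=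
  mixed_schmidt_conjecture_general d i₁ j₁ i₂ j₂ hi₁ hj₁ hij₁ hi₂ hj₂ hij₂
end

section
/- Let $p$ and $q$ be two distinct prime numbers, and let $(i_1,j_1)$ and $(i_2,j_2)$ be two pairs of real numbers with $0 < i_s, j_s < 1$ and $i_s + j_s = 1$ for $s = 1,2$. Then $\mathrm{Bad}_p(i_1,j_1) \cap \mathrm{Bad}_q(i_2,j_2) \neq \emptyset$. -/
/-- The usual `p`-adic norm of a natural number: `|n|_p = p ^ (-v_p(n))`. -/
noncomputable def padicAbs (p n : ℕ) : ℝ := (p : ℝ) ^ (-(padicValNat p n : ℤ))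

/-- The set of `p`-adic mixed `(i,j)`-badly approximable numbers `Bad_p(i,j)`. -/
def Badp (p : ℕ) (i j : ℝ) : Set ℝ :=
  {x : ℝ | ∃ c : ℝ, 0 < c ∧ ∀ n : ℕ, 0 < n →
    max (padicAbs p n ^ (1 / i)) (distNearestInt ((n : ℝ) * x) ^ (1 / j)) > c / (n : ℝ)}

/-!
Fix `κ = 2⁻¹³`. A real `x` lies in `Bad_R(i,j)` as soon as it avoids the interval of radius
`(κ/n)^j/n` about every `a/n` whose denominator has a large `R`-part, `|n|_R^{1/i} ≤ κ/n`.
Sort these centres by the scale `16⁻ᵗ` of their radius. For two distinct centres `a/n`, `a'/n'`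
of the same scale with `v = v_R(n) ≤ v_R(n')` we have `n' < 16n`, and `R^v ≥ (n/κ)^i` divides
both denominators; hence `|a/n - a'/n'| ≥ R^v/(nn') > 32·16⁻ᵗ`. So a window of length
`18·16⁻ᵗ` meets at most one centre of scale `t` for `p` and one for `q`, and among three
well-spaced subintervals of length `16⁻ᵗ` of an interval of length `16¹⁻ᵗ` one stays `16⁻ᵗ`-far
from both. Iterating gives nested compact intervals whose common point lies in both sets.
-/

open Set

lemma exists_Icc_avoiding_pair {ε : ℝ} (hε : 0 < ε) (u y₁ y₂ : ℝ) :
    ∃ v, Icc v (v + ε) ⊆ Icc u (u + 16 * ε) ∧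
      ∀ z ∈ Icc v (v + ε), ε < |z - y₁| ∧ ε < |z - y₂| := by
  have far : ∀ v y, y ∉ Icc (v - ε) (v + 2 * ε) → ∀ z ∈ Icc v (v + ε), ε < |z - y| := by
    intro v y hy z ⟨hvz, hzv⟩
    simp only [mem_Icc, not_and_or, not_le] at hy
    rw [lt_abs]
    rcases hy with hy | hy
    · left; linarith
    · right; linarith
  -- the blocking intervals `[v - ε, v + 2ε]` of the three candidates are pairwise disjoint
  obtain ⟨v, hv, h₁, h₂⟩ : ∃ v ∈ ({u, u + 5 * ε, u + 10 * ε} : Set ℝ),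
      y₁ ∉ Icc (v - ε) (v + 2 * ε) ∧ y₂ ∉ Icc (v - ε) (v + 2 * ε) := by
    simp only [mem_insert_iff, mem_singleton_iff, exists_eq_or_imp, exists_eq_left, mem_Icc]
    by_contra! h
    obtain ⟨h₀, h₅, h₁₀⟩ := h
    rcases lt_or_ge y₁ (u + 7 / 2 * ε) with hy | hy
    · linarith [(h₅ fun _ => by linarith).2, (h₁₀ fun _ => by linarith).1]
    rcases lt_or_ge y₁ (u + 17 / 2 * ε) with hy' | hy'
    · linarith [(h₀ fun _ => by linarith).2, (h₁₀ fun _ => by linarith).1]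
    · linarith [(h₀ fun _ => by linarith).2, (h₅ fun _ => by linarith).1]
  refine ⟨v, Icc_subset_Icc ?_ ?_, fun z hz => ⟨far v y₁ h₁ z hz, far v y₂ h₂ z hz⟩⟩ <;>
    rcases hv with rfl | rfl | rfl <;> linarith

lemma exists_Icc_avoiding {ε u y₁ y₂ : ℝ} (hε : 0 < ε) {D : Set ℝ}
    (hD : D ∩ Icc (u - ε) (u + 17 * ε) ⊆ {y₁, y₂}) :
    ∃ v, Icc v (v + ε) ⊆ Icc u (u + 16 * ε) ∧ ∀ y ∈ D, ∀ z ∈ Icc v (v + ε), ε < |z - y| := by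
  obtain ⟨v, hsub, hfar⟩ := exists_Icc_avoiding_pair hε u y₁ y₂
  refine ⟨v, hsub, fun y hy z hz => ?_⟩
  by_contra! hzy
  obtain ⟨hu, hu'⟩ := hsub hz
  obtain ⟨hzy₁, hzy₂⟩ := abs_le.1 hzy
  rcases hD ⟨hy, by linarith, by linarith⟩ with rfl | rfl
  exacts [(hfar z hz).1.not_ge hzy, (hfar z hz).2.not_ge hzy]

theorem exists_forall_lt_abs_sub_of_inter_Icc_subset_pair (D : ℕ → Set ℝ)
    (hD : ∀ t u, ∃ y₁ y₂,
      D t ∩ Icc (u - (16 : ℝ)⁻¹ ^ t) (u + 17 * (16 : ℝ)⁻¹ ^ t) ⊆ {y₁, y₂}) :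
    ∃ x, ∀ t, ∀ y ∈ D t, (16 : ℝ)⁻¹ ^ t < |x - y| := by
  have step : ∀ t u, ∃ v, Icc v (v + 16 * (16 : ℝ)⁻¹ ^ (t + 1)) ⊆
      Icc u (u + 16 * (16 : ℝ)⁻¹ ^ t) ∧
      ∀ y ∈ D t, ∀ z ∈ Icc v (v + 16 * (16 : ℝ)⁻¹ ^ (t + 1)), (16 : ℝ)⁻¹ ^ t < |z - y| := by
    intro t u
    obtain ⟨y₁, y₂, h⟩ := hD t u
    rw [show 16 * (16 : ℝ)⁻¹ ^ (t + 1) = (16 : ℝ)⁻¹ ^ t by rw [pow_succ]; ring]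
    exact exists_Icc_avoiding (by positivity) h
  choose g hg_sub hg_far using step
  let u : ℕ → ℝ := fun t => Nat.rec 0 g t
  obtain ⟨x, hx⟩ := IsCompact.nonempty_iInter_of_sequence_nonempty_isCompact_isClosed
    (fun t => Icc (u t) (u t + 16 * (16 : ℝ)⁻¹ ^ t)) (fun t => hg_sub t (u t))
    (fun t => nonempty_Icc.2 (le_add_of_nonneg_right (by positivity))) isCompact_Icc
    (fun _ => isClosed_Icc)
  rw [mem_iInter] at hx
  exact ⟨x, fun t y hy => hg_far t (u t) y hy x (hx (t + 1))⟩

lemma exists_inter_Icc_subset_singleton {D : Set ℝ} {δ a b : ℝ}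
    (hD : D.Pairwise fun y y' => δ < |y - y'|) (hab : b - a ≤ δ) :
    ∃ y₀, D ∩ Icc a b ⊆ {y₀} := by
  rcases (D ∩ Icc a b).eq_empty_or_nonempty with h | ⟨y₀, hy₀, ha₀, hb₀⟩
  · exact ⟨0, h.subset.trans (empty_subset _)⟩
  refine ⟨y₀, fun y ⟨hy, ha, hb⟩ => ?_⟩
  by_contra hne
  have hsep : δ < |y - y₀| := hD hy hy₀ hne
  rw [lt_abs] at hsep
  rcases hsep with h | h <;> linarith

theorem exists_forall_lt_abs_sub_of_pairwise (D₁ D₂ : ℕ → Set ℝ)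
    (h₁ : ∀ t, (D₁ t).Pairwise fun y y' => 18 * (16 : ℝ)⁻¹ ^ t < |y - y'|)
    (h₂ : ∀ t, (D₂ t).Pairwise fun y y' => 18 * (16 : ℝ)⁻¹ ^ t < |y - y'|) :
    ∃ x, ∀ t, ∀ y ∈ D₁ t ∪ D₂ t, (16 : ℝ)⁻¹ ^ t < |x - y| := by
  refine exists_forall_lt_abs_sub_of_inter_Icc_subset_pair _ fun t u => ?_
  obtain ⟨y₁, hy₁⟩ := exists_inter_Icc_subset_singleton (h₁ t) (b := u + 17 * (16 : ℝ)⁻¹ ^ t)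
    (a := u - (16 : ℝ)⁻¹ ^ t) (by linarith)
  obtain ⟨y₂, hy₂⟩ := exists_inter_Icc_subset_singleton (h₂ t) (b := u + 17 * (16 : ℝ)⁻¹ ^ t)
    (a := u - (16 : ℝ)⁻¹ ^ t) (by linarith)
  refine ⟨y₁, y₂, ?_⟩
  rw [union_inter_distrib_right, insert_eq]
  exact union_subset_union hy₁ hy₂

noncomputable def badRadius (κ j x : ℝ) : ℝ := (κ / x) ^ j / x

section badRadius

variable {κ j : ℝ}

lemma badRadius_antitoneOn (hκ : 0 ≤ κ) (hj : 0 ≤ j) : AntitoneOn (badRadius κ j) (Ioi 0) := by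
  intro x hx y hy hxy
  rw [mem_Ioi] at hx hy
  unfold badRadius
  gcongr

lemma badRadius_mul_le (hκ : 0 ≤ κ) (hj : 0 ≤ j) {k x : ℝ} (hk : 1 ≤ k) (hx : 0 < x) :
    badRadius κ j (k * x) ≤ badRadius κ j x / k := by
  have hk₀ : 0 < k := by linarith
  have hkj : 1 ≤ k ^ j := Real.one_le_rpow hk hj
  have hr : 0 ≤ (κ / x) ^ j / x / k := by positivity
  calc badRadius κ j (k * x) = (κ / x) ^ j / x / k / k ^ j := by
        rw [badRadius, show κ / (k * x) = κ / x / k by rw [div_div, mul_comm],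
          Real.div_rpow (by positivity) hk₀.le]
        ring
    _ ≤ badRadius κ j x / k := div_le_self hr hkj

lemma lt_mul_of_badRadius_lt_mul (hκ : 0 ≤ κ) (hj : 0 ≤ j) {k x y : ℝ} (hk : 1 ≤ k) (hx : 0 < x)
    (h : badRadius κ j x < k * badRadius κ j y) : y < k * x := by
  by_contra! hle
  have hkx : 0 < k * x := by positivity
  have hle' := (badRadius_antitoneOn hκ hj hkx (hkx.trans_le hle) hle).trans
    (badRadius_mul_le hκ hj hk hx)
  rw [le_div_iff₀ (by linarith)] at hle'
  linarith

lemma rpow_div_div_mul_self_eq_badRadius_div {i : ℝ} (hij : i + j = 1) (hκ : 0 < κ) {x : ℝ}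
    (hx : 0 < x) :
    (x / κ) ^ i / (x * x) = badRadius κ j x / κ := by
  rw [show i = 1 - j by linarith, Real.rpow_sub (by positivity), Real.rpow_one, badRadius,
    ← inv_div κ, Real.inv_rpow (by positivity)]
  field_simp

end badRadius

lemma div_rpow_le_pow_padicValNat {R n : ℕ} {i κ : ℝ} (hR : 0 < R) (hi : 0 < i) (hκ : 0 < κ)
    (hn : 0 < n) (h : padicAbs R n ^ (1 / i) ≤ κ / n) :
    ((n : ℝ) / κ) ^ i ≤ (R : ℝ) ^ padicValNat R n := by
  have habs : padicAbs R n = ((R : ℝ) ^ padicValNat R n)⁻¹ := by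
    rw [padicAbs, zpow_neg, zpow_natCast]
  have hpos : 0 < padicAbs R n := by rw [habs]; positivity
  rw [one_div, Real.rpow_inv_le_iff_of_pos hpos.le (by positivity) hi] at h
  calc ((n : ℝ) / κ) ^ i = ((κ / n) ^ i)⁻¹ := by rw [← Real.inv_rpow (by positivity), inv_div]
    _ ≤ (padicAbs R n)⁻¹ := inv_anti₀ hpos h
    _ = (R : ℝ) ^ padicValNat R n := by rw [habs, inv_inv]

lemma div_le_abs_div_sub_div {d n n' : ℕ} {a a' : ℤ} (hn : 0 < n) (hn' : 0 < n') (hd : d ∣ n)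
    (hd' : d ∣ n') (hne : (a : ℝ) / n ≠ a' / n') :
    (d : ℝ) / (n * n') ≤ |(a : ℝ) / n - a' / n'| := by
  have hdvd : (d : ℤ) ∣ a * n' - n * a' :=
    dvd_sub (dvd_mul_of_dvd_right (Int.natCast_dvd_natCast.2 hd') _)
      (dvd_mul_of_dvd_left (Int.natCast_dvd_natCast.2 hd) _)
  have hne' : a * n' - n * a' ≠ 0 := by
    intro h
    apply hne
    rw [div_eq_div_iff (by positivity) (by positivity)]
    exact_mod_cast (sub_eq_zero.1 h).trans (mul_comm _ _)
  have hle : (d : ℤ) ≤ |a * n' - n * a'| := Int.le_of_dvd (abs_pos.2 hne') ((dvd_abs _ _).2 hdvd)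
  rw [div_sub_div _ _ (by positivity) (by positivity), abs_div,
    abs_of_pos (by positivity : (0 : ℝ) < n * n')]
  gcongr
  exact_mod_cast hle

lemma badRadius_div_le_abs_div_sub_div {R n n' : ℕ} {a a' : ℤ} {i j κ k : ℝ} (hR : 0 < R)
    (hi : 0 < i) (hj : 0 ≤ j) (hij : i + j = 1) (hκ : 0 < κ) (hk : 1 ≤ k) (hn : 0 < n)
    (hn' : 0 < n') (hsmall : padicAbs R n ^ (1 / i) ≤ κ / n)
    (hv : padicValNat R n ≤ padicValNat R n') (hr : badRadius κ j n < k * badRadius κ j n')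
    (hne : (a : ℝ) / n ≠ a' / n') :
    badRadius κ j n / (k * κ) ≤ |(a : ℝ) / n - a' / n'| := by
  have hn'k : (n' : ℝ) < k * n := lt_mul_of_badRadius_lt_mul hκ.le hj hk (by positivity) hr
  have hk₀ : 0 < k := by linarith
  calc badRadius κ j n / (k * κ) = (n / κ) ^ i / (n * (k * n)) := by
        rw [mul_comm k, ← div_div,
          ← rpow_div_div_mul_self_eq_badRadius_div hij hκ (by positivity : (0 : ℝ) < n)]
        field_simp
    _ ≤ (n / κ) ^ i / (n * n') := by gcongr
    _ ≤ (R : ℝ) ^ padicValNat R n / (n * n') := by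
        gcongr
        exact div_rpow_le_pow_padicValNat hR hi hκ hn hsmall
    _ ≤ |(a : ℝ) / n - a' / n'| := by
        exact_mod_cast div_le_abs_div_sub_div hn hn' pow_padicValNat_dvd
          ((pow_dvd_pow R hv).trans pow_padicValNat_dvd) hne

def badCenters (R : ℕ) (i j κ : ℝ) (t : ℕ) : Set ℝ :=
  {y | ∃ (n : ℕ) (a : ℤ), 0 < n ∧ padicAbs R n ^ (1 / i) ≤ κ / n ∧
    badRadius κ j n ∈ Ioc ((16 : ℝ)⁻¹ ^ (t + 1)) ((16 : ℝ)⁻¹ ^ t) ∧ y = a / n}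

lemma pairwise_badCenters {R : ℕ} {i j κ : ℝ} (hR : 0 < R) (hi : 0 < i) (hj : 0 ≤ j)
    (hij : i + j = 1) (hκ : 0 < κ) (t : ℕ) :
    (badCenters R i j κ t).Pairwise fun y y' => (16 : ℝ)⁻¹ ^ t / (256 * κ) < |y - y'| := by
  rintro _ ⟨n, a, hn, hsmall, ⟨hr₁, hr₂⟩, rfl⟩ _ ⟨n', a', hn', hsmall', ⟨hr₁', hr₂'⟩, rfl⟩ hne
  wlog hv : padicValNat R n ≤ padicValNat R n' generalizing n n' a a'
  · rw [abs_sub_comm]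
    exact this n' a' hn' hsmall' hr₁' hr₂' n a hn hsmall hr₁ hr₂ hne.symm (le_of_not_ge hv)
  rw [pow_succ] at hr₁ hr₁'
  calc (16 : ℝ)⁻¹ ^ t / (256 * κ) = (16 : ℝ)⁻¹ ^ t * 16⁻¹ / (16 * κ) := by field_simp; norm_num
    _ < badRadius κ j n / (16 * κ) := by gcongr
    _ ≤ _ := badRadius_div_le_abs_div_sub_div hR hi hj hij hκ (by norm_num) hn hn' hsmall hv
          (by linarith) hne

lemma mem_Badp_of_forall_lt_abs_sub {R : ℕ} {i j κ x : ℝ} (hj : 0 < j) (hκ : 0 < κ)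
    (hκ₁ : κ ≤ 1) (hx : ∀ t, ∀ y ∈ badCenters R i j κ t, (16 : ℝ)⁻¹ ^ t < |x - y|) :
    x ∈ Badp R i j := by
  refine ⟨κ, hκ, fun n hn => ?_⟩
  rcases lt_or_ge (κ / n) (padicAbs R n ^ (1 / i)) with hlarge | hsmall
  · exact lt_max_of_lt_left hlarge
  apply lt_max_of_lt_right
  have hn₀ : (0 : ℝ) < n := by exact_mod_cast hn
  have hn₁ : (1 : ℝ) ≤ n := by exact_mod_cast hn
  have hr₁ : badRadius κ j n ≤ 1 :=
    div_le_one_of_le₀ ((Real.rpow_le_one (by positivity)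
      (div_le_one_of_le₀ (hκ₁.trans hn₁) hn₀.le) hj.le).trans hn₁) hn₀.le
  obtain ⟨t, ht⟩ := exists_nat_pow_near_of_lt_one (by unfold badRadius; positivity) hr₁
    (by norm_num : (0 : ℝ) < 16⁻¹) (by norm_num)
  have hfar := hx t _ ⟨n, round (n * x), hn, hsmall, ht, rfl⟩
  have hdist : distNearestInt (n * x) = n * |x - round (n * x) / n| := by
    rw [distNearestInt, show (n : ℝ) * x - round (n * x) = n * (x - round (n * x) / n) by
      field_simp, abs_mul, abs_of_pos hn₀]
  rw [one_div, Real.lt_rpow_inv_iff_of_pos (by positivity)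
    (by unfold distNearestInt; positivity) hj, hdist]
  calc (κ / n) ^ j = n * badRadius κ j n := by rw [badRadius]; field_simp
    _ < n * |x - round (n * x) / n| := by gcongr; exact ht.2.trans_lt hfar

theorem badp_inter_badq_nonempty_general (p q : ℕ) (hp : p.Prime) (hq : q.Prime)
    (i₁ j₁ i₂ j₂ : ℝ)
    (hi₁ : 0 < i₁) (hj₁ : 0 < j₁) (hij₁ : i₁ + j₁ = 1)
    (hi₂ : 0 < i₂) (hj₂ : 0 < j₂) (hij₂ : i₂ + j₂ = 1) :
    (Badp p i₁ j₁ ∩ Badp q i₂ j₂).Nonempty := by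
  have hsep : ∀ {R : ℕ} {i j : ℝ}, 0 < R → 0 < i → 0 < j → i + j = 1 → ∀ t,
      (badCenters R i j (1 / 8192) t).Pairwise fun y y' => 18 * (16 : ℝ)⁻¹ ^ t < |y - y'| :=
    fun hR hi hj hij t => (pairwise_badCenters hR hi hj.le hij (by norm_num) t).mono'
      fun _ _ => lt_of_le_of_lt <| by
        rw [show (16 : ℝ)⁻¹ ^ t / (256 * (1 / 8192)) = 32 * 16⁻¹ ^ t by ring]
        gcongr
        norm_num
  obtain ⟨x, hx⟩ := exists_forall_lt_abs_sub_of_pairwise _ _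
    (hsep hp.pos hi₁ hj₁ hij₁) (hsep hq.pos hi₂ hj₂ hij₂)
  exact ⟨x, mem_Badp_of_forall_lt_abs_sub hj₁ (by norm_num) (by norm_num)
      fun t y hy => hx t y (Or.inl hy),
    mem_Badp_of_forall_lt_abs_sub hj₂ (by norm_num) (by norm_num)
      fun t y hy => hx t y (Or.inr hy)⟩

/-- For distinct primes `p, q` and admissible pairs `(i₁,j₁)`, `(i₂,j₂)`, the sets
`Bad_p(i₁,j₁)` and `Bad_q(i₂,j₂)` intersect. -/
theorem badp_inter_badq_nonempty (p q : ℕ) (hp : p.Prime) (hq : q.Prime) (hpq : p ≠ q)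
    (i₁ j₁ i₂ j₂ : ℝ)
    (hi₁ : 0 < i₁) (hi₁' : i₁ < 1) (hj₁ : 0 < j₁) (hj₁' : j₁ < 1) (hij₁ : i₁ + j₁ = 1)
    (hi₂ : 0 < i₂) (hi₂' : i₂ < 1) (hj₂ : 0 < j₂) (hj₂' : j₂ < 1) (hij₂ : i₂ + j₂ = 1) :
    (Badp p i₁ j₁ ∩ Badp q i₂ j₂).Nonempty :=
  badp_inter_badq_nonempty_general p q hp hq i₁ j₁ i₂ j₂ hi₁ hj₁ hij₁ hi₂ hj₂ hij₂
end
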